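/- For every integer n ≥ 3: (a) the kernel of J(n,0), viewed as a linear map ℝ⁴ → ℝ⁴, is the one-dimensional subspace spanned by e₄ = (0,0,0,1); (b) λ = 0 is a simple root of the polynomial λ ↦ det J(n,λ), i.e. det J(n,0) = 0 while the derivative of λ ↦ det J(n,λ) at λ = 0 is nonzero (this is the statement that J(n,λ)⁻¹ has a simple pole at λ = 0). -/

import Mathlib

open Matrix

/-- The indicial family `I_{g₍₀₎}(λ)` of the linearized gauge-fixed Einstein operator,
in the block decomposition of symmetric 2-tensors (all blocks scalar, with the trace
replaced by multiplication by `n`). -/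
noncomputable def J (n : ℕ) (lam : ℝ) : Matrix (Fin 4) (Fin 4) ℝ :=
  (lam ^ 2 - (n : ℝ) * lam) • (1 : Matrix (Fin 4) (Fin 4) ℝ) +
    !![-4 * lam + 2 * ((n : ℝ) + 2), 0, 2 * (n : ℝ) * (lam - 2), 0;
       0, -4 * lam + 3 * ((n : ℝ) + 1), 0, 0;
       (-2 : ℝ), 0, 2 * (n : ℝ), 0;
       0, 0, 0, 0]

/-!
The direction `e₄` decouples from the other three, with diagonal entry `λ² - nλ`, which has a
simple zero at `λ = 0`. The complementary `3 × 3` block is invertible at `λ = 0`: it is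
block triangular with determinant `3(n + 1) · (2(n + 2) · 2n - 8n) = 12 n² (n + 1)`.
Hence `ker J(n,0) = ℝ e₄`, and `det J(n,λ) = λ (λ - n) D(λ)` with `D(0) = 12 n² (n + 1)`,
so the derivative of the determinant at `0` is `-12 n³ (n + 1) ≠ 0`.
-/

lemma J_eq (n : ℕ) (lam : ℝ) : J n lam =
    !![lam ^ 2 - n * lam - 4 * lam + 2 * (n + 2), 0, 2 * n * (lam - 2), 0;
       0, lam ^ 2 - n * lam - 4 * lam + 3 * (n + 1), 0, 0;
       -2, 0, lam ^ 2 - n * lam + 2 * n, 0;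
       0, 0, 0, lam ^ 2 - n * lam] := by
  ext i j
  fin_cases i <;> fin_cases j <;> simp [_root_.J, one_apply] <;> ring

lemma J_zero_mulVec (n : ℕ) (x : Fin 4 → ℝ) :
    J n 0 *ᵥ x = ![2 * (n + 2) * x 0 - 4 * n * x 2, 3 * (n + 1) * x 1,
      -2 * x 0 + 2 * n * x 2, 0] := by
  ext i
  fin_cases i <;> simp [J_eq, mulVec, dotProduct, Fin.sum_univ_succ]; ring

lemma J_zero_mulVec_eq_zero_iff {n : ℕ} (hn : n ≠ 0) {x : Fin 4 → ℝ} :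
    J n 0 *ᵥ x = 0 ↔ x 0 = 0 ∧ x 1 = 0 ∧ x 2 = 0 := by
  have hn' : (n : ℝ) ≠ 0 := Nat.cast_ne_zero.mpr hn
  rw [J_zero_mulVec]
  constructor
  · intro h
    have h0 := congrFun h 0
    have h1 := congrFun h 1
    have h2 := congrFun h 2
    simp only [cons_val, Pi.zero_apply] at h0 h1 h2
    have hx1 : x 1 = 0 := by
      rcases mul_eq_zero.mp h1 with h | h
      · linarith [(n.cast_nonneg : (0 : ℝ) ≤ n)]
      · exact h
    have hx2 : x 2 = 0 := by
      have : (2 * (n : ℝ) ^ 2) * x 2 = 0 := by linear_combination h0 + ((n : ℝ) + 2) * h2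
      exact (mul_eq_zero.mp this).resolve_left (by positivity)
    exact ⟨by linear_combination (-1 / 2 : ℝ) * h2 + (n : ℝ) * hx2, hx1, hx2⟩
  · rintro ⟨hx0, hx1, hx2⟩
    ext i
    fin_cases i <;> simp [hx0, hx1, hx2]

lemma mem_span_e₄_iff (x : Fin 4 → ℝ) :
    x ∈ Submodule.span ℝ {![0, 0, 0, (1 : ℝ)]} ↔ x 0 = 0 ∧ x 1 = 0 ∧ x 2 = 0 := by
  rw [Submodule.mem_span_singleton]
  constructor
  · rintro ⟨a, rfl⟩
    simp
  · rintro ⟨hx0, hx1, hx2⟩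
    refine ⟨x 3, ?_⟩
    ext i
    fin_cases i <;> simp [hx0, hx1, hx2]

lemma ker_J_zero {n : ℕ} (hn : n ≠ 0) :
    LinearMap.ker (J n 0).mulVecLin = Submodule.span ℝ {![0, 0, 0, (1 : ℝ)]} := by
  ext x
  rw [LinearMap.mem_ker, mulVecLin_apply, J_zero_mulVec_eq_zero_iff hn, mem_span_e₄_iff]

lemma det_J (n : ℕ) (lam : ℝ) : (J n lam).det =
    lam * ((lam - n) * (lam ^ 2 - n * lam - 4 * lam + 3 * (n + 1)) *
      ((lam ^ 2 - n * lam - 4 * lam + 2 * (n + 2)) * (lam ^ 2 - n * lam + 2 * n)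
        + 4 * n * (lam - 2))) := by
  rw [J_eq, det_succ_row_zero]
  simp [Fin.sum_univ_succ, det_fin_three, Fin.succAbove]
  ring

lemma deriv_id_mul_at_zero {q : ℝ → ℝ} (hq : DifferentiableAt ℝ q 0) :
    deriv (fun x => x * q x) 0 = q 0 := by
  simpa using ((hasDerivAt_id' 0).fun_mul hq.hasDerivAt).deriv

lemma deriv_det_J_zero (n : ℕ) :
    deriv (fun lam => (J n lam).det) 0 = -(12 * n ^ 3 * (n + 1)) := by
  simp_rw [det_J]
  rw [deriv_id_mul_at_zero (by fun_prop)]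
  ring

/-- (a) The kernel of `J(n,0) : ℝ⁴ → ℝ⁴` is spanned by `e₄ = (0,0,0,1)`;
(b) `λ = 0` is a simple root of `λ ↦ det J(n,λ)`: the determinant vanishes at `0`
but its derivative there does not (so `J(n,λ)⁻¹` has a simple pole at `λ = 0`). -/
theorem kernel_and_simple_pole_at_zero (n : ℕ) (hn : 3 ≤ n) :
    LinearMap.ker (J n 0).mulVecLin = Submodule.span ℝ {![0, 0, 0, (1 : ℝ)]} ∧
    (J n 0).det = 0 ∧
    deriv (fun lam : ℝ => (J n lam).det) 0 ≠ 0 := by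
  have hn₀ : n ≠ 0 := by omega
  refine ⟨ker_J_zero hn₀, by simp [det_J], ?_⟩
  rw [deriv_det_J_zero]
  have : (n : ℝ) ≠ 0 := Nat.cast_ne_zero.mpr hn₀
  exact neg_ne_zero.mpr (by positivity)
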